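/- For f ∈ H^N(ℝ) ∩ L²(⟨z⟩²dz) with N ≥ 7, one has sup_ζ (1+ζ²)|f̂(ζ)| ≲ ‖f‖_{L²}^{1/8} (‖f‖_{H^N} + ‖zf‖_{L²})^{7/8}. -/

import Mathlib

open MeasureTheory Complex Set
open scoped ENNReal NNReal

noncomputable section

/-- Fourier transform on ℝ (angular frequency convention). -/
def FT (f : ℝ → ℂ) (ζ : ℝ) : ℂ := ∫ z : ℝ, Complex.exp (-(Complex.I) * z * ζ) * f z

/-- The `H^N(ℝ)` Sobolev norm, computed on the Fourier side. -/
def sobNorm (N : ℕ) (f : ℝ → ℂ) : ℝ≥0∞ :=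
  (∫⁻ ζ : ℝ, ENNReal.ofReal ((1 + ζ ^ 2) ^ (N : ℝ)) * (‖FT f ζ‖₊ : ℝ≥0∞) ^ 2) ^ ((1 : ℝ) / 2)

lemma ofReal_norm_eq_coe_nnnorm {E : Type*} [SeminormedAddCommGroup E] (a : E) :
    ENNReal.ofReal ‖a‖ = (‖a‖₊ : ℝ≥0∞) := ENNReal.ofReal_eq_coe_nnreal _

/-- |e^{iθ}-1| ≤ 2|θ| for real θ. -/
lemma norm_exp_I_mul_sub_one_le (θ : ℝ) : ‖Complex.exp (Complex.I * θ) - 1‖ ≤ 2 * |θ| := by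
  rcases le_or_gt (|θ|) 1 with h | h
  · have := Complex.norm_exp_sub_one_le (x := Complex.I * θ) (by simpa using h)
    simpa using this
  · have h1 : ‖Complex.exp (Complex.I * θ)‖ = 1 := by
      rw [Complex.norm_exp]
      simp
    calc ‖Complex.exp (Complex.I * θ) - 1‖ ≤ ‖Complex.exp (Complex.I * θ)‖ + ‖(1:ℂ)‖ :=
          norm_sub_le _ _
      _ = 2 := by rw [h1]; norm_num
      _ ≤ 2 * |θ| := by nlinarith

/-- Cauchy-Schwarz for lintegral, p=q=2. -/
lemma lintegral_CS (μ : Measure ℝ) {F G : ℝ → ℝ≥0∞} (hF : AEMeasurable F μ)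
    (hG : AEMeasurable G μ) :
    ∫⁻ z, F z * G z ∂μ ≤ (∫⁻ z, F z ^ (2:ℝ) ∂μ) ^ ((1:ℝ)/2) * (∫⁻ z, G z ^ (2:ℝ) ∂μ) ^ ((1:ℝ)/2) :=
  ENNReal.lintegral_mul_le_Lp_mul_Lq μ ⟨by norm_num, by norm_num, by norm_num⟩ hF hG

lemma lintegral_sq_eq (f : ℝ → ℂ) :
    ∫⁻ z, ((‖f z‖₊ : ℝ≥0∞)) ^ (2:ℝ) = (eLpNorm f 2 volume) ^ (2:ℝ) := by
  rw [eLpNorm_eq_lintegral_rpow_enorm_toReal two_ne_zero ENNReal.ofNat_ne_top, ← ENNReal.rpow_mul]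
  norm_num
  rfl

/-- CS with the constant 1 on a set. -/
lemma setLIntegral_le_sqrt_mul {s : Set ℝ} (G : ℝ → ℝ≥0∞) (hG : AEMeasurable G volume) :
    ∫⁻ z in s, G z ≤ (volume s) ^ ((1:ℝ)/2) * (∫⁻ z in s, G z ^ (2:ℝ)) ^ ((1:ℝ)/2) := by
  have h := lintegral_CS (volume.restrict s) (F := fun _ => 1) (G := G)
    aemeasurable_const hG.restrict
  simpa using h

lemma lint_inv_sq_Ioi {R : ℝ} (hR : 0 < R) :
    ∫⁻ x in Ioi R, ENNReal.ofReal ((|x| ^ 2)⁻¹) = ENNReal.ofReal R⁻¹ := by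
  have hcong : ∫⁻ x in Ioi R, ENNReal.ofReal ((|x| ^ 2)⁻¹)
      = ∫⁻ x in Ioi R, ENNReal.ofReal (x ^ (-2 : ℝ)) := by
    apply setLIntegral_congr_fun measurableSet_Ioi
    intro x hx
    have hx0 : 0 < x := hR.trans hx
    dsimp only
    rw [abs_of_pos hx0, Real.rpow_neg hx0.le, ← Real.rpow_natCast x 2]
    norm_num
  rw [hcong, ← ofReal_integral_eq_lintegral_ofReal
    (integrableOn_Ioi_rpow_of_lt (by norm_num) hR)]
  · rw [integral_Ioi_rpow_of_lt (by norm_num) hR]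
    norm_num
    rw [Real.rpow_neg_one]
  · filter_upwards [ae_restrict_mem measurableSet_Ioi] with x hx
    exact Real.rpow_nonneg (le_of_lt (hR.trans hx)) _

lemma lint_inv_sq_out {R : ℝ} (hR : 0 < R) :
    ∫⁻ x in {z : ℝ | R < |z|}, ENNReal.ofReal ((|x| ^ 2)⁻¹) = ENNReal.ofReal (2/R) := by
  have hset : {z : ℝ | R < |z|} = Iio (-R) ∪ Ioi R := by
    ext z
    simp only [mem_setOf_eq, mem_union, mem_Iio, mem_Ioi, lt_abs]
    constructor
    · rintro (h | h); · right; exact h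
      · left; linarith
    · rintro (h | h); · right; linarith
      · left; exact h
  have hneg : ∫⁻ x in Iio (-R), ENNReal.ofReal ((|x| ^ 2)⁻¹) = ENNReal.ofReal R⁻¹ := by
    have := (Measure.measurePreserving_neg (volume : Measure ℝ)).setLIntegral_comp_emb
      measurableEmbedding_neg (fun x => ENNReal.ofReal ((|x| ^ 2)⁻¹)) (Ioi R)
    rw [image_neg_Ioi] at this
    rw [← this]
    simp_rw [abs_neg]
    exact lint_inv_sq_Ioi hR
  rw [hset, lintegral_union measurableSet_Ioi ((Set.Iio_disjoint_Ici (by linarith)).mono_right Set.Ioi_subset_Ici_self),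
    hneg, lint_inv_sq_Ioi hR, ← ENNReal.ofReal_add (by positivity) (by positivity)]
  rw [div_eq_mul_inv]
  ring

lemma rpow_half_sq (E : ℝ≥0∞) : (E ^ (2:ℝ)) ^ ((1:ℝ)/2) = E := by
  rw [← ENNReal.rpow_mul]; norm_num

/-- second factor of CS on a set is at most the L² norm. -/
lemma sq_factor_le (f : ℝ → ℂ) (s : Set ℝ) :
    (∫⁻ z in s, ((‖f z‖₊ : ℝ≥0∞)) ^ (2:ℝ)) ^ ((1:ℝ)/2) ≤ eLpNorm f 2 volume := by
  calc (∫⁻ z in s, ((‖f z‖₊ : ℝ≥0∞)) ^ (2:ℝ)) ^ ((1:ℝ)/2)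
      ≤ (∫⁻ z, ((‖f z‖₊ : ℝ≥0∞)) ^ (2:ℝ)) ^ ((1:ℝ)/2) := by
        apply ENNReal.rpow_le_rpow _ (by norm_num)
        exact lintegral_mono' Measure.restrict_le_self le_rfl
    _ = eLpNorm f 2 volume := by rw [lintegral_sq_eq, rpow_half_sq]

/-- bound on the inner region: `∫_{s} ‖h‖ ≤ √(vol s) ‖h‖₂`. -/
lemma in_bound (s : Set ℝ) (h : ℝ → ℂ) (hm : AEStronglyMeasurable h volume) :
    ∫⁻ z in s, (‖h z‖₊ : ℝ≥0∞) ≤ (volume s) ^ ((1:ℝ)/2) * eLpNorm h 2 volume := by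
  have hcs := lintegral_CS (volume.restrict s) (F := fun _ => 1)
    (G := fun z => (‖h z‖₊ : ℝ≥0∞)) aemeasurable_const hm.enorm.restrict
  simp only [one_mul] at hcs
  calc ∫⁻ z in s, (‖h z‖₊ : ℝ≥0∞) ≤ (∫⁻ _ in s, (1:ℝ≥0∞) ^ (2:ℝ)) ^ ((1:ℝ)/2) *
        (∫⁻ z in s, ((‖h z‖₊ : ℝ≥0∞)) ^ (2:ℝ)) ^ ((1:ℝ)/2) := hcs
    _ ≤ (volume s) ^ ((1:ℝ)/2) * eLpNorm h 2 volume := by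
        apply mul_le_mul' _ (sq_factor_le h s)
        simp

/-- tail bound: `∫_{|z|>R} ‖f‖ ≤ √(2/R) ‖zf‖₂`. -/
lemma out_bound {R : ℝ} (hR : 0 < R) (f : ℝ → ℂ) (hm : AEStronglyMeasurable f volume) :
    ∫⁻ z in {z : ℝ | R < |z|}, (‖f z‖₊ : ℝ≥0∞) ≤
      (ENNReal.ofReal (2/R)) ^ ((1:ℝ)/2) * eLpNorm (fun z : ℝ => (z:ℂ) * f z) 2 volume := by
  set s := {z : ℝ | R < |z|} with hs_def
  have hs : MeasurableSet s := measurableSet_lt measurable_const (by measurability)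
  have hzf : AEStronglyMeasurable (fun z : ℝ => (z:ℂ) * f z) volume :=
    (Complex.continuous_ofReal.aestronglyMeasurable).mul hm
  have hcong : ∫⁻ z in s, (‖f z‖₊ : ℝ≥0∞)
      = ∫⁻ z in s, ENNReal.ofReal (|z|⁻¹) * (‖(z:ℂ) * f z‖₊ : ℝ≥0∞) := by
    apply setLIntegral_congr_fun hs
    intro z hz
    have hz0 : z ≠ 0 := by
      intro h; rw [hs_def] at hz; simp [h] at hz; linarith
    dsimp only
    rw [← ofReal_norm_eq_coe_nnnorm, ← ofReal_norm_eq_coe_nnnorm, ← ENNReal.ofReal_mul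
      (by positivity)]
    congr 1
    rw [norm_mul, Complex.norm_real, Real.norm_eq_abs]
    rw [← mul_assoc, inv_mul_cancel₀ (by simpa using hz0), one_mul]
  rw [hcong]
  have hcs := lintegral_CS (volume.restrict s) (F := fun z => ENNReal.ofReal (|z|⁻¹))
    (G := fun z => (‖(z:ℂ) * f z‖₊ : ℝ≥0∞))
    (by apply Measurable.aemeasurable; measurability) hzf.enorm.restrict
  refine le_trans hcs (mul_le_mul' ?_ (sq_factor_le _ s))
  apply ENNReal.rpow_le_rpow _ (by norm_num)
  have : ∀ z : ℝ, (ENNReal.ofReal (|z|⁻¹)) ^ (2:ℝ) = ENNReal.ofReal ((|z| ^ 2)⁻¹) := by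
    intro z
    rw [ENNReal.ofReal_rpow_of_nonneg (by positivity) (by norm_num)]
    rw [show (2:ℝ) = ((2:ℕ):ℝ) by norm_num, Real.rpow_natCast, inv_pow]
  simp_rw [this]
  exact le_of_eq (lint_inv_sq_out hR)

lemma meas_out (R : ℝ) : MeasurableSet {z : ℝ | R < |z|} :=
  measurableSet_lt measurable_const (by measurability)

lemma compl_out (R : ℝ) : {z : ℝ | R < |z|}ᶜ = Icc (-R) R := by
  ext z; simp [abs_le, not_lt, and_comm]

lemma vol_compl_out {R : ℝ} (hR : 0 < R) :
    volume ({z : ℝ | R < |z|}ᶜ) = ENNReal.ofReal (2*R) := by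
  rw [compl_out, Real.volume_Icc]
  congr 1; ring

lemma lintegral_split (f : ℝ → ℂ) (hm : AEStronglyMeasurable f volume) {R : ℝ} (hR : 0 < R) :
    ∫⁻ z, (‖f z‖₊ : ℝ≥0∞) ≤
      (ENNReal.ofReal (2*R)) ^ ((1:ℝ)/2) * eLpNorm f 2 volume
      + (ENNReal.ofReal (2/R)) ^ ((1:ℝ)/2) * eLpNorm (fun z : ℝ => (z:ℂ) * f z) 2 volume := by
  rw [← lintegral_add_compl (fun z => (‖f z‖₊ : ℝ≥0∞)) (meas_out R)]
  rw [add_comm]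
  apply add_le_add
  · refine le_trans (in_bound _ f hm) ?_
    rw [vol_compl_out hR]
  · exact out_bound hR f hm

lemma FT_nnnorm_le (f : ℝ → ℂ) (ζ : ℝ) :
    (‖FT f ζ‖₊ : ℝ≥0∞) ≤ ∫⁻ z, (‖f z‖₊ : ℝ≥0∞) := by
  refine le_trans (enorm_integral_le_lintegral_enorm _) (le_of_eq ?_)
  simp only [enorm_eq_nnnorm]
  congr 1 with z
  rw [nnnorm_mul]
  norm_cast
  rw [show ‖Complex.exp (-Complex.I * z * ζ)‖₊ = 1 from ?_, one_mul]
  ext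
  rw [coe_nnnorm, Complex.norm_exp,
    show (-Complex.I * z * ζ).re = 0 by simp, Real.exp_zero, NNReal.coe_one]

lemma FT_continuous {f : ℝ → ℂ} (hf : Integrable f) : Continuous (FT f) := by
  apply continuous_of_dominated (bound := fun z => ‖f z‖)
  · intro ζ
    exact (Continuous.aestronglyMeasurable (by continuity)).mul hf.1
  · intro ζ
    filter_upwards with z
    rw [norm_mul]
    have : ‖Complex.exp (-Complex.I * z * ζ)‖ = 1 := by
      rw [Complex.norm_exp,
        show (-Complex.I * z * ζ).re = 0 by simp, Real.exp_zero]
    rw [this, one_mul]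
  · exact hf.norm
  · filter_upwards with z
    have : Continuous fun ζ : ℝ => -Complex.I * z * (ζ:ℂ) := by continuity
    exact (Complex.continuous_exp.comp this).mul continuous_const

lemma norm_exp_eq_one (z ζ : ℝ) : ‖Complex.exp (-Complex.I * z * ζ)‖ = 1 := by
  rw [Complex.norm_exp,
    show (-Complex.I * z * ζ).re = 0 by simp, Real.exp_zero]

lemma exp_integrable {f : ℝ → ℂ} (hf : Integrable f) (ζ : ℝ) :
    Integrable (fun z : ℝ => Complex.exp (-Complex.I * z * ζ) * f z) := by
  apply Integrable.bdd_mul hf (Continuous.aestronglyMeasurable (by continuity))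
  exact ae_of_all _ fun z => le_of_eq (norm_exp_eq_one z ζ)

/-- Hölder-1/2 continuity of FT in terms of the weighted L² norm. -/
lemma FT_sub_le {f : ℝ → ℂ} (hf : Integrable f) {ζ η δ : ℝ} (hδ : 0 < δ)
    (hd : |η - ζ| ≤ δ) :
    (‖FT f η - FT f ζ‖₊ : ℝ≥0∞) ≤ ENNReal.ofReal (6 * δ ^ ((1:ℝ)/2)) *
      eLpNorm (fun z : ℝ => (z:ℂ) * f z) 2 volume := by
  have hsub : FT f η - FT f ζ
      = ∫ z : ℝ, (Complex.exp (-Complex.I * z * η) - Complex.exp (-Complex.I * z * ζ)) * f z := by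
    rw [FT, FT, ← integral_sub (exp_integrable hf η) (exp_integrable hf ζ)]
    congr 1 with z
    ring
  rw [hsub]
  refine le_trans (enorm_integral_le_lintegral_enorm _) ?_
  simp only [enorm_eq_nnnorm]
  -- pointwise norm bound
  have hpt : ∀ z : ℝ, ‖Complex.exp (-Complex.I * z * η) - Complex.exp (-Complex.I * z * ζ)‖
      ≤ min 2 (2 * (|z| * δ)) := by
    intro z
    apply le_min
    · calc ‖Complex.exp (-Complex.I * z * η) - Complex.exp (-Complex.I * z * ζ)‖
          ≤ ‖Complex.exp (-Complex.I * z * η)‖ + ‖Complex.exp (-Complex.I * z * ζ)‖ :=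
            norm_sub_le _ _
        _ = 2 := by rw [norm_exp_eq_one, norm_exp_eq_one]; norm_num
    · have hfac : Complex.exp (-Complex.I * z * η) - Complex.exp (-Complex.I * z * ζ)
          = Complex.exp (-Complex.I * z * ζ) *
            (Complex.exp (Complex.I * ((z * (ζ - η) : ℝ) : ℂ)) - 1) := by
        rw [mul_sub, ← Complex.exp_add, mul_one]
        congr 1
        push_cast
        ring
      rw [hfac, norm_mul, norm_exp_eq_one, one_mul]
      calc ‖Complex.exp (Complex.I * ((z * (ζ - η) : ℝ) : ℂ)) - 1‖ ≤ 2 * |z * (ζ - η)| :=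
            norm_exp_I_mul_sub_one_le _
        _ ≤ 2 * (|z| * δ) := by
            rw [abs_mul]
            have : |ζ - η| ≤ δ := by rw [abs_sub_comm]; exact hd
            nlinarith [abs_nonneg z]
  -- split the integral
  set s := {z : ℝ | (1/δ) < |z|} with hs_def
  have hR : (0:ℝ) < 1/δ := by positivity
  rw [← lintegral_add_compl (fun z : ℝ =>
    (‖(Complex.exp (-Complex.I * z * η) - Complex.exp (-Complex.I * z * ζ)) * f z‖₊ : ℝ≥0∞))
    (meas_out (1/δ))]
  have houter : ∫⁻ z in s,
      (‖(Complex.exp (-Complex.I * z * η) - Complex.exp (-Complex.I * z * ζ)) * f z‖₊ : ℝ≥0∞)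
      ≤ ENNReal.ofReal 2 * ((ENNReal.ofReal (2*δ)) ^ ((1:ℝ)/2) *
          eLpNorm (fun z : ℝ => (z:ℂ) * f z) 2 volume) := by
    calc ∫⁻ z in s, (‖(Complex.exp (-Complex.I * z * η) - Complex.exp (-Complex.I * z * ζ))
            * f z‖₊ : ℝ≥0∞)
        ≤ ∫⁻ z in s, ENNReal.ofReal 2 * (‖f z‖₊ : ℝ≥0∞) := by
          apply lintegral_mono
          intro z
          dsimp only
          rw [← ofReal_norm_eq_coe_nnnorm, ← ofReal_norm_eq_coe_nnnorm, ← ENNReal.ofReal_mul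
            (by norm_num), norm_mul]
          apply ENNReal.ofReal_le_ofReal
          exact mul_le_mul_of_nonneg_right ((hpt z).trans (min_le_left _ _)) (norm_nonneg _)
      _ = ENNReal.ofReal 2 * ∫⁻ z in s, (‖f z‖₊ : ℝ≥0∞) := lintegral_const_mul' _ _ (by simp)
      _ ≤ ENNReal.ofReal 2 * ((ENNReal.ofReal (2*δ)) ^ ((1:ℝ)/2) *
            eLpNorm (fun z : ℝ => (z:ℂ) * f z) 2 volume) := by
          apply mul_le_mul_right
          have := out_bound hR f hf.1
          rw [show 2 / (1/δ) = 2*δ by field_simp] at this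
          exact this
  have hinner : ∫⁻ z in sᶜ,
      (‖(Complex.exp (-Complex.I * z * η) - Complex.exp (-Complex.I * z * ζ)) * f z‖₊ : ℝ≥0∞)
      ≤ ENNReal.ofReal (2*δ) * ((volume sᶜ) ^ ((1:ℝ)/2) *
          eLpNorm (fun z : ℝ => (z:ℂ) * f z) 2 volume) := by
    calc ∫⁻ z in sᶜ, (‖(Complex.exp (-Complex.I * z * η) - Complex.exp (-Complex.I * z * ζ))
            * f z‖₊ : ℝ≥0∞)
        ≤ ∫⁻ z in sᶜ, ENNReal.ofReal (2*δ) * (‖(z:ℂ) * f z‖₊ : ℝ≥0∞) := by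
          apply lintegral_mono
          intro z
          dsimp only
          rw [← ofReal_norm_eq_coe_nnnorm, ← ofReal_norm_eq_coe_nnnorm, ← ENNReal.ofReal_mul
            (by positivity), norm_mul, norm_mul, Complex.norm_real, Real.norm_eq_abs]
          apply ENNReal.ofReal_le_ofReal
          calc ‖Complex.exp (-Complex.I * z * η) - Complex.exp (-Complex.I * z * ζ)‖ * ‖f z‖
              ≤ (2 * (|z| * δ)) * ‖f z‖ :=
                mul_le_mul_of_nonneg_right ((hpt z).trans (min_le_right _ _)) (norm_nonneg _)
            _ = 2 * δ * (|z| * ‖f z‖) := by ring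
      _ = ENNReal.ofReal (2*δ) * ∫⁻ z in sᶜ, (‖(z:ℂ) * f z‖₊ : ℝ≥0∞) :=
          lintegral_const_mul' _ _ ENNReal.ofReal_ne_top
      _ ≤ ENNReal.ofReal (2*δ) * ((volume sᶜ) ^ ((1:ℝ)/2) *
            eLpNorm (fun z : ℝ => (z:ℂ) * f z) 2 volume) := by
          apply mul_le_mul_right
          exact in_bound _ _ ((Complex.continuous_ofReal.aestronglyMeasurable).mul hf.1)
  refine le_trans (add_le_add houter hinner) ?_
  rw [vol_compl_out hR, show 2 * (1/δ) = 2/δ by ring]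
  -- now pure ENNReal/real arithmetic
  set Z := eLpNorm (fun z : ℝ => (z:ℂ) * f z) 2 volume
  have e1 : (ENNReal.ofReal (2*δ)) ^ ((1:ℝ)/2) = ENNReal.ofReal ((2*δ) ^ ((1:ℝ)/2)) :=
    ENNReal.ofReal_rpow_of_nonneg (by positivity) (by norm_num)
  have e2 : (ENNReal.ofReal (2/δ)) ^ ((1:ℝ)/2) = ENNReal.ofReal ((2/δ) ^ ((1:ℝ)/2)) :=
    ENNReal.ofReal_rpow_of_nonneg (by positivity) (by norm_num)
  rw [e1, e2, ← mul_assoc, ← mul_assoc, ← ENNReal.ofReal_mul (by norm_num),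
    ← ENNReal.ofReal_mul (by positivity), ← add_mul]
  apply mul_le_mul_left
  rw [← ENNReal.ofReal_add (by positivity) (by positivity)]
  apply ENNReal.ofReal_le_ofReal
  -- real inequality : 2*(2δ)^(1/2) + (2δ)*(2/δ)^(1/2) ≤ 6 δ^(1/2)
  have h2 : ((2:ℝ)*δ) ^ ((1:ℝ)/2) = 2 ^ ((1:ℝ)/2) * δ ^ ((1:ℝ)/2) :=
    Real.mul_rpow (by norm_num) hδ.le
  have h3 : ((2:ℝ)/δ) ^ ((1:ℝ)/2) = 2 ^ ((1:ℝ)/2) / δ ^ ((1:ℝ)/2) :=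
    Real.div_rpow (by norm_num) hδ.le _
  have hsq2 : (2:ℝ) ^ ((1:ℝ)/2) ≤ 1.5 := by
    rw [show (1.5:ℝ) = 2.25 ^ ((1:ℝ)/2) from ?_]
    · exact Real.rpow_le_rpow (by norm_num) (by norm_num) (by norm_num)
    · rw [show (2.25:ℝ) = 1.5 ^ (2:ℕ) by norm_num, ← Real.rpow_natCast (1.5:ℝ) 2,
        ← Real.rpow_mul (by norm_num)]
      norm_num
  have hδpos : (0:ℝ) < δ ^ ((1:ℝ)/2) := Real.rpow_pos_of_pos hδ _
  have hrr : δ ^ ((1:ℝ)/2) * δ ^ ((1:ℝ)/2) = δ := by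
    rw [← Real.rpow_add hδ]
    norm_num
  rw [h2, h3]
  set r := δ ^ ((1:ℝ)/2)
  set s2 := (2:ℝ) ^ ((1:ℝ)/2)
  have hs2pos : 0 < s2 := Real.rpow_pos_of_pos (by norm_num) _
  rw [div_eq_mul_inv]
  have hinv : r⁻¹ = r / δ := by
    rw [eq_div_iff hδ.ne', inv_mul_eq_div, div_eq_iff hδpos.ne', hrr]
  rw [hinv]
  have : 2 * (s2 * r) + 2 * δ * (s2 * (r / δ)) = 4 * s2 * r := by
    field_simp
    ring
  rw [this]
  nlinarith

lemma window_bound {f : ℝ → ℂ} (hf : Integrable f) (N : ℕ) {ζ δ p q : ℝ} (hδ : 0 < δ)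
    (hq : q = p + δ) (hζ : ζ = p ∨ ζ = q) (hwt : ∀ η ∈ Icc p q, 1 + ζ^2 ≤ 1 + η^2) :
    ENNReal.ofReal δ * (‖FT f ζ‖₊ : ℝ≥0∞) ≤
      (ENNReal.ofReal δ) ^ ((1:ℝ)/2) *
        ((sobNorm N f ^ (2:ℝ)) / ENNReal.ofReal ((1 + ζ^2) ^ (N:ℝ))) ^ ((1:ℝ)/2)
      + ENNReal.ofReal δ * (ENNReal.ofReal (6 * δ ^ ((1:ℝ)/2)) *
          eLpNorm (fun z : ℝ => (z:ℂ) * f z) 2 volume) := by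
  set Z := eLpNorm (fun z : ℝ => (z:ℂ) * f z) 2 volume with hZ
  set G : ℝ → ℝ≥0∞ := fun η => (‖FT f η‖₊ : ℝ≥0∞) with hG
  have hGmeas : Measurable G := (FT_continuous hf).measurable.enorm
  have hpq : p ≤ q := by rw [hq]; linarith
  have hvol : volume (Icc p q) = ENNReal.ofReal δ := by
    rw [Real.volume_Icc, hq]; congr 1; ring
  -- pointwise comparison on the window
  have hpt : ∀ η ∈ Icc p q, G ζ ≤ G η + ENNReal.ofReal (6 * δ ^ ((1:ℝ)/2)) * Z := by
    intro η hη
    have hd : |ζ - η| ≤ δ := by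
      rcases hζ with h | h <;> subst h <;> rw [abs_le] <;>
        exact ⟨by linarith [hη.1, hη.2, hq.le, hq.ge], by linarith [hη.1, hη.2, hq.le, hq.ge]⟩
    have tri : ‖FT f ζ‖₊ ≤ ‖FT f ζ - FT f η‖₊ + ‖FT f η‖₊ := by
      have := nnnorm_add_le (FT f ζ - FT f η) (FT f η)
      rwa [sub_add_cancel] at this
    calc G ζ ≤ (‖FT f ζ - FT f η‖₊ : ℝ≥0∞) + G η := by
          simp only [hG]; exact_mod_cast tri
      _ ≤ ENNReal.ofReal (6 * δ ^ ((1:ℝ)/2)) * Z + G η :=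
          add_le_add_left (FT_sub_le hf hδ hd) _
      _ = G η + ENNReal.ofReal (6 * δ ^ ((1:ℝ)/2)) * Z := add_comm _ _
  -- integrate the constant over the window
  have hstep1 : ENNReal.ofReal δ * G ζ ≤
      (∫⁻ η in Icc p q, G η) + ENNReal.ofReal δ * (ENNReal.ofReal (6 * δ ^ ((1:ℝ)/2)) * Z) := by
    have : ENNReal.ofReal δ * G ζ = ∫⁻ _ in Icc p q, G ζ := by
      rw [setLIntegral_const, hvol, mul_comm]
    rw [this]
    calc ∫⁻ η in Icc p q, G ζ
        ≤ ∫⁻ η in Icc p q, (G η + ENNReal.ofReal (6 * δ ^ ((1:ℝ)/2)) * Z) := by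
          apply setLIntegral_mono' measurableSet_Icc hpt
      _ = (∫⁻ η in Icc p q, G η) + ENNReal.ofReal δ * (ENNReal.ofReal (6 * δ ^ ((1:ℝ)/2)) * Z) := by
          rw [lintegral_add_left hGmeas, setLIntegral_const, hvol, mul_comm]
  -- Cauchy-Schwarz over the window plus the weight comparison
  have hstep2 : ∫⁻ η in Icc p q, G η ≤
      (ENNReal.ofReal δ) ^ ((1:ℝ)/2) *
        ((sobNorm N f ^ (2:ℝ)) / ENNReal.ofReal ((1 + ζ^2) ^ (N:ℝ))) ^ ((1:ℝ)/2) := by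
    refine le_trans (setLIntegral_le_sqrt_mul G hGmeas.aemeasurable) ?_
    rw [hvol]
    apply mul_le_mul_right
    apply ENNReal.rpow_le_rpow _ (by norm_num)
    -- ∫⁻_I G² ≤ sobNorm² / U
    set U := ENNReal.ofReal ((1 + ζ^2) ^ (N:ℝ)) with hU
    have hU0 : U ≠ 0 := by
      rw [hU]
      simp only [ne_eq, ENNReal.ofReal_eq_zero, not_le]
      positivity
    have hUt : U ≠ ⊤ := ENNReal.ofReal_ne_top
    rw [ENNReal.le_div_iff_mul_le (Or.inl hU0) (Or.inl hUt)]
    calc (∫⁻ η in Icc p q, G η ^ (2:ℝ)) * U = ∫⁻ η in Icc p q, U * G η ^ (2:ℝ) := by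
          rw [mul_comm]
          exact (lintegral_const_mul' U _ hUt).symm
      _ ≤ ∫⁻ η in Icc p q, ENNReal.ofReal ((1 + η^2) ^ (N:ℝ)) * G η ^ (2:ℝ) := by
          apply setLIntegral_mono' measurableSet_Icc
          intro η hη
          apply mul_le_mul_left
          rw [hU]
          exact ENNReal.ofReal_le_ofReal
            (Real.rpow_le_rpow (by positivity) (hwt η hη) (by positivity))
      _ ≤ ∫⁻ η, ENNReal.ofReal ((1 + η^2) ^ (N:ℝ)) * G η ^ (2:ℝ) :=
          lintegral_mono' Measure.restrict_le_self le_rfl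
      _ = sobNorm N f ^ (2:ℝ) := by
          rw [sobNorm, ← ENNReal.rpow_mul, show (1:ℝ)/2 * 2 = 1 by norm_num,
            ENNReal.rpow_one]
          congr 1 with η
          rw [show (2:ℝ) = ((2:ℕ):ℝ) by norm_num, ENNReal.rpow_natCast]
  calc ENNReal.ofReal δ * G ζ
      ≤ (∫⁻ η in Icc p q, G η) + ENNReal.ofReal δ * (ENNReal.ofReal (6 * δ ^ ((1:ℝ)/2)) * Z) :=
        hstep1
    _ ≤ (ENNReal.ofReal δ) ^ ((1:ℝ)/2) *
        ((sobNorm N f ^ (2:ℝ)) / ENNReal.ofReal ((1 + ζ^2) ^ (N:ℝ))) ^ ((1:ℝ)/2)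
      + ENNReal.ofReal δ * (ENNReal.ofReal (6 * δ ^ ((1:ℝ)/2)) * Z) := add_le_add_left hstep2 _

lemma sqrt_mul_self' {y : ℝ} (hy : 0 ≤ y) : y ^ ((1:ℝ)/2) * y ^ ((1:ℝ)/2) = y := by
  rcases eq_or_lt_of_le hy with h | h
  · rw [← h, Real.zero_rpow (by norm_num)]; ring
  · rw [← Real.rpow_add h]; norm_num

lemma rpow_sq_half {y : ℝ} (hy : 0 ≤ y) : (y^2) ^ ((1:ℝ)/2) = y := by
  rw [← Real.rpow_natCast y 2, ← Real.rpow_mul hy]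
  norm_num

lemma div_half_mul {c d : ℝ} (hc : 0 ≤ c) (hd : 0 < d) :
    (c/d) ^ ((1:ℝ)/2) * d = (c*d) ^ ((1:ℝ)/2) := by
  rw [Real.div_rpow hc hd.le, Real.mul_rpow hc hd.le, div_mul_eq_mul_div, mul_div_assoc]
  congr 1
  rw [eq_comm, eq_div_iff (Real.rpow_pos_of_pos hd _).ne', sqrt_mul_self' hd.le]

lemma real_endgame {N : ℕ} (hN : 7 ≤ N) {x u a w z : ℝ}
    (hx : 0 ≤ x) (hu : 1 ≤ u) (ha : 0 < a) (hw : 0 ≤ w) (hz : 0 < z)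
    (h0 : ∀ R : ℝ, 0 < R → x ≤ (2*R) ^ ((1:ℝ)/2) * a + (2/R) ^ ((1:ℝ)/2) * z)
    (h1 : ∀ δ : ℝ, 0 < δ →
      δ * x ≤ δ ^ ((1:ℝ)/2) * (w^2 / u^((N:ℝ))) ^ ((1:ℝ)/2) + δ * (6 * δ ^ ((1:ℝ)/2) * z)) :
    u * x ≤ 32 * a ^ ((1:ℝ)/8) * (w + z) ^ ((7:ℝ)/8) := by
  have hu0 : (0:ℝ) < u := lt_of_lt_of_le one_pos hu
  -- Step 0 : x ≤ 3 (a z)^{1/2}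
  have hx0 : x ≤ 3 * (a*z) ^ ((1:ℝ)/2) := by
    have hR : (0:ℝ) < z/a := by positivity
    have h := h0 (z/a) hR
    have e1 : (2*(z/a)) ^ ((1:ℝ)/2) * a = (2*(z*a)) ^ ((1:ℝ)/2) := by
      rw [show 2*(z/a) = (2*z)/a by ring, div_half_mul (by positivity) ha]
      congr 1; ring
    have e2 : (2/(z/a)) ^ ((1:ℝ)/2) * z = (2*(a*z)) ^ ((1:ℝ)/2) := by
      rw [div_div_eq_mul_div, div_half_mul (by positivity) hz]
      congr 1; ring
    rw [e1, e2] at h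
    have e3 : (2*(z*a)) ^ ((1:ℝ)/2) = 2 ^ ((1:ℝ)/2) * (a*z) ^ ((1:ℝ)/2) := by
      rw [← Real.mul_rpow (by norm_num) (by positivity)]
      congr 1; ring
    have e4 : (2*(a*z)) ^ ((1:ℝ)/2) = 2 ^ ((1:ℝ)/2) * (a*z) ^ ((1:ℝ)/2) := by
      rw [← Real.mul_rpow (by norm_num) (by positivity)]
    have hs2 : (2:ℝ) ^ ((1:ℝ)/2) ≤ 1.5 := by
      rw [show (1.5:ℝ) = (2.25) ^ ((1:ℝ)/2) from (by rw [show (2.25:ℝ) = 1.5^2 by norm_num,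
        rpow_sq_half (by norm_num)])]
      exact Real.rpow_le_rpow (by norm_num) (by norm_num) (by norm_num)
    have hpz : (0:ℝ) ≤ (a*z) ^ ((1:ℝ)/2) := Real.rpow_nonneg (by positivity) _
    rw [e3, e4] at h
    nlinarith
  -- Step 1 : u^{4/3} x ≤ 7 (w z)^{1/2}
  have hx1 : u ^ ((4:ℝ)/3) * x ≤ 7 * (w*z) ^ ((1:ℝ)/2) := by
    set s := u ^ ((4:ℝ)/3) with hs
    have hspos : 0 < s := Real.rpow_pos_of_pos hu0 _
    rcases eq_or_lt_of_le hw with hw0 | hwpos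
    · -- w = 0 : show x = 0
      have hxz : x ≤ 0 := by
        by_contra hxc
        push_neg at hxc
        have hδ : (0:ℝ) < (x/(12*z))^2 := by positivity
        have h := h1 _ hδ
        rw [← hw0] at h
        have e0 : ((0:ℝ)^2 / u^((N:ℝ))) ^ ((1:ℝ)/2) = 0 := by
          rw [show ((0:ℝ)^2 / u^((N:ℝ))) = 0 by simp, Real.zero_rpow (by norm_num)]
        rw [e0, mul_zero, zero_add] at h
        have hxle : x ≤ 6 * ((x/(12*z))^2) ^ ((1:ℝ)/2) * z := le_of_mul_le_mul_left h hδ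
        rw [rpow_sq_half (by positivity)] at hxle
        have he : 6 * (x/(12*z)) * z = x/2 := by field_simp; ring
        rw [he] at hxle
        linarith
      have hx00 : x = 0 := le_antisymm hxz hx
      rw [hx00, mul_zero]
      positivity
    · -- w > 0
      set α := w ^ ((1:ℝ)/2) with hαd
      set β := z ^ ((1:ℝ)/2) with hβd
      set τ := (w/z) ^ ((1:ℝ)/2) with hτd
      have hαpos : 0 < α := Real.rpow_pos_of_pos hwpos _
      have hβpos : 0 < β := Real.rpow_pos_of_pos hz _
      have hτpos : 0 < τ := Real.rpow_pos_of_pos (by positivity) _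
      have hα : α*α = w := sqrt_mul_self' hwpos.le
      have hβ : β*β = z := sqrt_mul_self' hz.le
      have hτm : τ*τ = w/z := sqrt_mul_self' (by positivity)
      have hτβ : τ*β = α := by
        rw [hτd, hβd, hαd, ← Real.mul_rpow (by positivity) hz.le, div_mul_cancel₀ _ hz.ne']
      have hδpos : (0:ℝ) < w/z/s^2 := by positivity
      have h := h1 _ hδpos
      have hδh : (w/z/s^2) ^ ((1:ℝ)/2) = τ / s := by
        rw [Real.div_rpow (by positivity) (by positivity), rpow_sq_half hspos.le]
      rw [hδh] at h
      -- bound (w²/u^N)^{1/2} by w/s²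
      have hP : (w^2 / u^((N:ℝ))) ^ ((1:ℝ)/2) ≤ w / s^2 := by
        have e : (w^2 / u^((N:ℝ))) ^ ((1:ℝ)/2) = w / u ^ ((N:ℝ)*(1/2)) := by
          rw [Real.div_rpow (by positivity) (by positivity), rpow_sq_half hwpos.le,
            ← Real.rpow_mul hu0.le]
        have hs2 : s^2 = u ^ ((8:ℝ)/3) := by
          rw [hs, ← Real.rpow_natCast (u ^ ((4:ℝ)/3)) 2, ← Real.rpow_mul hu0.le]
          norm_num
        have hexp : u ^ ((8:ℝ)/3) ≤ u ^ ((N:ℝ)*(1/2)) := by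
          apply Real.rpow_le_rpow_of_exponent_le hu
          have : (7:ℝ) ≤ (N:ℝ) := by exact_mod_cast hN
          linarith
        rw [e, hs2]
        exact div_le_div_of_nonneg_left hwpos.le (Real.rpow_pos_of_pos hu0 _) hexp
      have h2 : w/z/s^2 * x ≤ (τ/s) * (w/s^2) + (w/z/s^2) * (6*(τ/s)*z) := by
        refine le_trans h (add_le_add_left ?_ _)
        exact mul_le_mul_of_nonneg_left hP (by positivity)
      have hkey : τ*w + 6*((w/z)*(τ*z)) = 7*((w/z)*(α*β)) := by
        rw [← hτm, ← hα, ← hβ]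
        linear_combination (τ*(6*τ*β - α)) * hτβ
      apply le_of_mul_le_mul_left _ hδpos
      calc (w/z/s^2) * (s*x) = s * ((w/z/s^2) * x) := by ring
        _ ≤ s * ((τ/s) * (w/s^2) + (w/z/s^2) * (6*(τ/s)*z)) :=
            mul_le_mul_of_nonneg_left h2 hspos.le
        _ = (τ*w + 6*((w/z)*(τ*z))) / s^2 := by field_simp
        _ = (7*((w/z)*(α*β))) / s^2 := by rw [hkey]
        _ = (w/z/s^2) * (7*(w*z) ^ ((1:ℝ)/2)) := by
            rw [show (w*z) ^ ((1:ℝ)/2) = α * β from by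
              rw [hαd, hβd, ← Real.mul_rpow hwpos.le hz.le]]
            field_simp
  -- Step 2 : combine
  rcases eq_or_lt_of_le hx with hx00 | hxpos
  · rw [← hx00, mul_zero]
    positivity
  · have hcomb : u * x = (u ^ ((4:ℝ)/3) * x) ^ ((3:ℝ)/4) * x ^ ((1:ℝ)/4) := by
      rw [Real.mul_rpow (by positivity) hx, ← Real.rpow_mul hu0.le,
        show (4:ℝ)/3 * (3/4) = 1 by norm_num, Real.rpow_one,
        mul_assoc, ← Real.rpow_add hxpos]
      norm_num
    rw [hcomb]
    have hf1 : (u ^ ((4:ℝ)/3) * x) ^ ((3:ℝ)/4) ≤ (7 * (w*z) ^ ((1:ℝ)/2)) ^ ((3:ℝ)/4) :=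
      Real.rpow_le_rpow (by positivity) hx1 (by norm_num)
    have hf2 : x ^ ((1:ℝ)/4) ≤ (3 * (a*z) ^ ((1:ℝ)/2)) ^ ((1:ℝ)/4) :=
      Real.rpow_le_rpow hx hx0 (by norm_num)
    calc (u ^ ((4:ℝ)/3) * x) ^ ((3:ℝ)/4) * x ^ ((1:ℝ)/4)
        ≤ (7 * (w*z) ^ ((1:ℝ)/2)) ^ ((3:ℝ)/4) * (3 * (a*z) ^ ((1:ℝ)/2)) ^ ((1:ℝ)/4) := by
          apply mul_le_mul hf1 hf2 (by positivity) (by positivity)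
      _ = 7 ^ ((3:ℝ)/4) * 3 ^ ((1:ℝ)/4) * ((w*z) ^ ((3:ℝ)/8) * (a*z) ^ ((1:ℝ)/8)) := by
          have hA : (7 * (w*z) ^ ((1:ℝ)/2)) ^ ((3:ℝ)/4)
              = 7 ^ ((3:ℝ)/4) * (w*z) ^ ((3:ℝ)/8) := by
            rw [Real.mul_rpow (by norm_num) (by positivity),
              ← Real.rpow_mul (by positivity)]
            norm_num
          have hB : (3 * (a*z) ^ ((1:ℝ)/2)) ^ ((1:ℝ)/4)
              = 3 ^ ((1:ℝ)/4) * (a*z) ^ ((1:ℝ)/8) := by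
            rw [Real.mul_rpow (by norm_num) (by positivity),
              ← Real.rpow_mul (by positivity)]
            norm_num
          rw [hA, hB]
          ring
      _ ≤ 21 * ((w*z) ^ ((3:ℝ)/8) * (a*z) ^ ((1:ℝ)/8)) := by
          apply mul_le_mul_of_nonneg_right _ (by positivity)
          have c1 : (7:ℝ) ^ ((3:ℝ)/4) ≤ 7 := by
            calc (7:ℝ) ^ ((3:ℝ)/4) ≤ 7 ^ (1:ℝ) :=
              Real.rpow_le_rpow_of_exponent_le (by norm_num) (by norm_num)
            _ = 7 := Real.rpow_one 7
          have c2 : (3:ℝ) ^ ((1:ℝ)/4) ≤ 3 := by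
            calc (3:ℝ) ^ ((1:ℝ)/4) ≤ 3 ^ (1:ℝ) :=
              Real.rpow_le_rpow_of_exponent_le (by norm_num) (by norm_num)
            _ = 3 := Real.rpow_one 3
          have hp1 : (0:ℝ) ≤ 7 ^ ((3:ℝ)/4) := by positivity
          have hp2 : (0:ℝ) ≤ 3 ^ ((1:ℝ)/4) := by positivity
          nlinarith
      _ ≤ 21 * (a ^ ((1:ℝ)/8) * (w+z) ^ ((7:ℝ)/8)) := by
          apply mul_le_mul_of_nonneg_left _ (by norm_num)
          rw [Real.mul_rpow hw hz.le, Real.mul_rpow ha.le hz.le]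
          have hzz : z ^ ((3:ℝ)/8) * z ^ ((1:ℝ)/8) = z ^ ((1:ℝ)/2) := by
            rw [← Real.rpow_add hz]; norm_num
          calc w ^ ((3:ℝ)/8) * z ^ ((3:ℝ)/8) * (a ^ ((1:ℝ)/8) * z ^ ((1:ℝ)/8))
              = a ^ ((1:ℝ)/8) * (w ^ ((3:ℝ)/8) * (z ^ ((3:ℝ)/8) * z ^ ((1:ℝ)/8))) := by ring
            _ = a ^ ((1:ℝ)/8) * (w ^ ((3:ℝ)/8) * z ^ ((1:ℝ)/2)) := by rw [hzz]
            _ ≤ a ^ ((1:ℝ)/8) * (w+z) ^ ((7:ℝ)/8) := by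
                apply mul_le_mul_of_nonneg_left _ (by positivity)
                calc w ^ ((3:ℝ)/8) * z ^ ((1:ℝ)/2)
                    ≤ (w+z) ^ ((3:ℝ)/8) * (w+z) ^ ((1:ℝ)/2) := by
                      apply mul_le_mul (Real.rpow_le_rpow hw (by linarith) (by norm_num))
                        (Real.rpow_le_rpow hz.le (by linarith) (by norm_num))
                        (by positivity) (by positivity)
                  _ = (w+z) ^ ((7:ℝ)/8) := by
                      rw [← Real.rpow_add (by linarith)]; norm_num
      _ ≤ 32 * a ^ ((1:ℝ)/8) * (w + z) ^ ((7:ℝ)/8) := by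
          rw [mul_assoc]
          apply mul_le_mul_of_nonneg_right (by norm_num) (by positivity)

/-- 1D model interpolation inequality:
`sup_ζ (1+ζ²)|f̂(ζ)| ≲ ‖f‖_{L²}^{1/8} (‖f‖_{H^N} + ‖zf‖_{L²})^{7/8}` for `N ≥ 7`. -/
theorem fourier_weighted_interpolation (N : ℕ) (hN : 7 ≤ N) :
    ∃ C : ℝ, 0 < C ∧ ∀ f : ℝ → ℂ, MemLp f 2 (volume : Measure ℝ) →
      (⨆ ζ : ℝ, ENNReal.ofReal (1 + ζ ^ 2) * (‖FT f ζ‖₊ : ℝ≥0∞)) ≤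
        ENNReal.ofReal C * (eLpNorm f 2 volume) ^ ((1 : ℝ) / 8) *
          (sobNorm N f + eLpNorm (fun z : ℝ => (z : ℂ) * f z) 2 volume) ^ ((7 : ℝ) / 8) := by
  refine ⟨32, by norm_num, ?_⟩
  intro f hf
  set Ae := eLpNorm f 2 volume with hAe
  set Ze := eLpNorm (fun z : ℝ => (z:ℂ) * f z) 2 volume with hZe
  set We := sobNorm N f with hWe
  have hzf_meas : AEStronglyMeasurable (fun z : ℝ => (z:ℂ) * f z) volume :=
    (Complex.continuous_ofReal.aestronglyMeasurable).mul hf.1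
  by_cases hA0 : Ae = 0
  · -- trivial case f = 0 a.e.
    have hf0 : f =ᵐ[volume] 0 := (eLpNorm_eq_zero_iff hf.1 two_ne_zero).mp hA0
    have hFT : ∀ ζ : ℝ, FT f ζ = 0 := by
      intro ζ
      rw [FT]
      apply integral_eq_zero_of_ae
      filter_upwards [hf0] with zz hzz
      rw [hzz]
      simp
    have : (⨆ ζ : ℝ, ENNReal.ofReal (1 + ζ ^ 2) * (‖FT f ζ‖₊ : ℝ≥0∞)) = 0 := by
      simp [hFT]
    rw [this]
    exact zero_le
  by_cases hWZ : We + Ze = ⊤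
  · -- RHS is infinite
    have hrpow : (We + Ze) ^ ((7:ℝ)/8) = ⊤ := by
      rw [hWZ]; exact ENNReal.top_rpow_of_pos (by norm_num)
    have hA8 : Ae ^ ((1:ℝ)/8) ≠ 0 := by
      rw [ne_eq, ENNReal.rpow_eq_zero_iff]
      push_neg
      constructor
      · intro h; exact absurd h hA0
      · intro h; norm_num
    have hfac : ENNReal.ofReal 32 * Ae ^ ((1:ℝ)/8) ≠ 0 := by
      apply mul_ne_zero _ hA8
      simp [ENNReal.ofReal_eq_zero]
    calc (⨆ ζ : ℝ, ENNReal.ofReal (1 + ζ ^ 2) * (‖FT f ζ‖₊ : ℝ≥0∞)) ≤ ⊤ := le_top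
      _ = ENNReal.ofReal 32 * Ae ^ ((1:ℝ)/8) * (We + Ze) ^ ((7:ℝ)/8) := by
          rw [hrpow, ENNReal.mul_top hfac]
  -- main case
  obtain ⟨hWt, hZt⟩ := ENNReal.add_ne_top.mp hWZ
  have hAlt : Ae < ⊤ := hf.2
  have hZ0 : Ze ≠ 0 := by
    intro hz0
    apply hA0
    have hzf0 : (fun z : ℝ => (z:ℂ) * f z) =ᵐ[volume] 0 :=
      (eLpNorm_eq_zero_iff hzf_meas two_ne_zero).mp hz0
    have hne : ∀ᵐ zz : ℝ, zz ≠ 0 := by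
      rw [ae_iff]
      have : {zz : ℝ | ¬ zz ≠ 0} = {0} := by ext zz; simp
      rw [this]
      exact Real.volume_singleton
    have hf0 : f =ᵐ[volume] 0 := by
      filter_upwards [hzf0, hne] with zz h1 h2
      have : (zz:ℂ) ≠ 0 := by exact_mod_cast h2
      simpa [this] using h1
    rw [hAe, eLpNorm_congr_ae hf0, eLpNorm_zero]
  have hint : Integrable f := by
    refine ⟨hf.1, ?_⟩
    rw [HasFiniteIntegral]
    apply lt_of_le_of_lt (lintegral_split f hf.1 one_pos)
    apply ENNReal.add_lt_top.mpr
    constructor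
    · exact ENNReal.mul_lt_top (by simp [ENNReal.rpow_lt_top_of_nonneg, ENNReal.ofReal_ne_top]) hAlt
    · exact ENNReal.mul_lt_top (by simp [ENNReal.rpow_lt_top_of_nonneg, ENNReal.ofReal_ne_top]) hZt.lt_top
  set a := Ae.toReal with ha_def
  set w := We.toReal with hw_def
  set z := Ze.toReal with hz_def
  have hapos : 0 < a := ENNReal.toReal_pos hA0 hAlt.ne
  have hzpos : 0 < z := ENNReal.toReal_pos hZ0 hZt
  have hwnn : 0 ≤ w := ENNReal.toReal_nonneg
  -- pointwise bound
  have hpt : ∀ ζ : ℝ, (1 + ζ^2) * ‖FT f ζ‖ ≤ 32 * a ^ ((1:ℝ)/8) * (w + z) ^ ((7:ℝ)/8) := by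
    intro ζ
    have hu : (1:ℝ) ≤ 1 + ζ^2 := by nlinarith [sq_nonneg ζ]
    -- h0
    have h0 : ∀ R : ℝ, 0 < R →
        ‖FT f ζ‖ ≤ (2*R) ^ ((1:ℝ)/2) * a + (2/R) ^ ((1:ℝ)/2) * z := by
      intro R hR
      have hE := le_trans (FT_nnnorm_le f ζ) (lintegral_split f hf.1 hR)
      have hfin : (ENNReal.ofReal (2*R)) ^ ((1:ℝ)/2) * Ae
          + (ENNReal.ofReal (2/R)) ^ ((1:ℝ)/2) * Ze ≠ ⊤ := by
        apply ENNReal.add_ne_top.mpr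
        constructor
        · exact (ENNReal.mul_lt_top
            (ENNReal.rpow_lt_top_of_nonneg (by norm_num) ENNReal.ofReal_ne_top) hAlt).ne
        · exact (ENNReal.mul_lt_top
            (by simp [ENNReal.rpow_lt_top_of_nonneg, ENNReal.ofReal_ne_top]) hZt.lt_top).ne
      have hne1 : (ENNReal.ofReal (2*R)) ^ ((1:ℝ)/2) * Ae ≠ ⊤ :=
        (ENNReal.mul_lt_top
          (ENNReal.rpow_lt_top_of_nonneg (by norm_num) ENNReal.ofReal_ne_top) hAlt).ne
      have hne2 : (ENNReal.ofReal (2/R)) ^ ((1:ℝ)/2) * Ze ≠ ⊤ :=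
        (ENNReal.mul_lt_top
          (by simp [ENNReal.rpow_lt_top_of_nonneg, ENNReal.ofReal_ne_top]) hZt.lt_top).ne
      have c1 : ((ENNReal.ofReal (2*R)) ^ ((1:ℝ)/2) * Ae).toReal = (2*R) ^ ((1:ℝ)/2) * a := by
        rw [ENNReal.toReal_mul, ← ENNReal.toReal_rpow, ENNReal.toReal_ofReal (by positivity)]
      have c2 : ((ENNReal.ofReal (2/R)) ^ ((1:ℝ)/2) * Ze).toReal = (2/R) ^ ((1:ℝ)/2) * z := by
        rw [ENNReal.toReal_mul, ← ENNReal.toReal_rpow, ENNReal.toReal_ofReal (by positivity)]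
      calc ‖FT f ζ‖ = ((‖FT f ζ‖₊ : ℝ≥0∞)).toReal := by simp
        _ ≤ ((ENNReal.ofReal (2*R)) ^ ((1:ℝ)/2) * Ae
              + (ENNReal.ofReal (2/R)) ^ ((1:ℝ)/2) * Ze).toReal := ENNReal.toReal_mono hfin hE
        _ = (2*R) ^ ((1:ℝ)/2) * a + (2/R) ^ ((1:ℝ)/2) * z := by
            rw [ENNReal.toReal_add hne1 hne2, c1, c2]
    -- h1
    have h1 : ∀ δ : ℝ, 0 < δ →
        δ * ‖FT f ζ‖ ≤ δ ^ ((1:ℝ)/2) * (w^2 / (1+ζ^2) ^ ((N:ℝ))) ^ ((1:ℝ)/2)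
          + δ * (6 * δ ^ ((1:ℝ)/2) * z) := by
      intro δ hδ
      have hwin : ENNReal.ofReal δ * (‖FT f ζ‖₊ : ℝ≥0∞) ≤
          (ENNReal.ofReal δ) ^ ((1:ℝ)/2) *
            ((We ^ (2:ℝ)) / ENNReal.ofReal ((1 + ζ^2) ^ (N:ℝ))) ^ ((1:ℝ)/2)
          + ENNReal.ofReal δ * (ENNReal.ofReal (6 * δ ^ ((1:ℝ)/2)) * Ze) := by
        rcases le_or_gt 0 ζ with hζs | hζs
        · apply window_bound hint N hδ (rfl : ζ + δ = ζ + δ) (Or.inl rfl)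
          intro η hη
          have h1 := hη.1
          nlinarith [hη.1, hη.2]
        · apply window_bound hint N hδ (show ζ = (ζ - δ) + δ by ring) (Or.inr rfl)
          intro η hη
          nlinarith [hη.1, hη.2]
      have hU0 : ENNReal.ofReal ((1 + ζ^2) ^ (N:ℝ)) ≠ 0 := by
        simp only [ne_eq, ENNReal.ofReal_eq_zero, not_le]
        positivity
      have hdivfin : (We ^ (2:ℝ)) / ENNReal.ofReal ((1 + ζ^2) ^ (N:ℝ)) ≠ ⊤ := by
        exact (ENNReal.div_lt_top (ENNReal.rpow_lt_top_of_nonneg (by norm_num) hWt).ne hU0).ne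
      have hfin : (ENNReal.ofReal δ) ^ ((1:ℝ)/2) *
            ((We ^ (2:ℝ)) / ENNReal.ofReal ((1 + ζ^2) ^ (N:ℝ))) ^ ((1:ℝ)/2)
          + ENNReal.ofReal δ * (ENNReal.ofReal (6 * δ ^ ((1:ℝ)/2)) * Ze) ≠ ⊤ := by
        apply ENNReal.add_ne_top.mpr
        constructor
        · exact (ENNReal.mul_lt_top
            (ENNReal.rpow_lt_top_of_nonneg (by norm_num) ENNReal.ofReal_ne_top)
            (ENNReal.rpow_lt_top_of_nonneg (by norm_num) hdivfin)).ne
        · exact (ENNReal.mul_lt_top ENNReal.ofReal_lt_top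
            (ENNReal.mul_lt_top ENNReal.ofReal_lt_top hZt.lt_top)).ne
      have hne1 : (ENNReal.ofReal δ) ^ ((1:ℝ)/2) *
          ((We ^ (2:ℝ)) / ENNReal.ofReal ((1 + ζ^2) ^ (N:ℝ))) ^ ((1:ℝ)/2) ≠ ⊤ :=
        (ENNReal.mul_lt_top
          (ENNReal.rpow_lt_top_of_nonneg (by norm_num) ENNReal.ofReal_ne_top)
          (ENNReal.rpow_lt_top_of_nonneg (by norm_num) hdivfin)).ne
      have hne2 : ENNReal.ofReal δ * (ENNReal.ofReal (6 * δ ^ ((1:ℝ)/2)) * Ze) ≠ ⊤ :=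
        (ENNReal.mul_lt_top ENNReal.ofReal_lt_top
          (ENNReal.mul_lt_top ENNReal.ofReal_lt_top hZt.lt_top)).ne
      have hW2 : (We ^ (2:ℝ)).toReal = w^2 := by
        rw [← ENNReal.toReal_rpow, ← Real.rpow_natCast We.toReal 2]
        norm_num
      have c1 : ((ENNReal.ofReal δ) ^ ((1:ℝ)/2) *
          ((We ^ (2:ℝ)) / ENNReal.ofReal ((1 + ζ^2) ^ (N:ℝ))) ^ ((1:ℝ)/2)).toReal
          = δ ^ ((1:ℝ)/2) * (w^2 / (1+ζ^2) ^ ((N:ℝ))) ^ ((1:ℝ)/2) := by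
        rw [ENNReal.toReal_mul, ← ENNReal.toReal_rpow, ← ENNReal.toReal_rpow,
          ENNReal.toReal_div, hW2, ENNReal.toReal_ofReal hδ.le,
          ENNReal.toReal_ofReal (by positivity)]
      have c2 : (ENNReal.ofReal δ * (ENNReal.ofReal (6 * δ ^ ((1:ℝ)/2)) * Ze)).toReal
          = δ * (6 * δ ^ ((1:ℝ)/2) * z) := by
        rw [ENNReal.toReal_mul, ENNReal.toReal_mul, ENNReal.toReal_ofReal hδ.le,
          ENNReal.toReal_ofReal (by positivity)]
      calc δ * ‖FT f ζ‖ = (ENNReal.ofReal δ * (‖FT f ζ‖₊ : ℝ≥0∞)).toReal := by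
            rw [ENNReal.toReal_mul, ENNReal.toReal_ofReal hδ.le]
            simp
        _ ≤ ((ENNReal.ofReal δ) ^ ((1:ℝ)/2) *
              ((We ^ (2:ℝ)) / ENNReal.ofReal ((1 + ζ^2) ^ (N:ℝ))) ^ ((1:ℝ)/2)
            + ENNReal.ofReal δ * (ENNReal.ofReal (6 * δ ^ ((1:ℝ)/2)) * Ze)).toReal :=
            ENNReal.toReal_mono hfin hwin
        _ = δ ^ ((1:ℝ)/2) * (w^2 / (1+ζ^2) ^ ((N:ℝ))) ^ ((1:ℝ)/2)
            + δ * (6 * δ ^ ((1:ℝ)/2) * z) := by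
            rw [ENNReal.toReal_add hne1 hne2, c1, c2]
    exact real_endgame hN (norm_nonneg _) hu hapos hwnn hzpos h0 h1
  -- assemble
  have hRHS : ENNReal.ofReal (32 * a ^ ((1:ℝ)/8) * (w + z) ^ ((7:ℝ)/8)) =
      ENNReal.ofReal 32 * Ae ^ ((1:ℝ)/8) * (We + Ze) ^ ((7:ℝ)/8) := by
    have hAe' : Ae = ENNReal.ofReal a := (ENNReal.ofReal_toReal hAlt.ne).symm
    have hWZ' : We + Ze = ENNReal.ofReal (w + z) := by
      rw [← ENNReal.toReal_add hWt hZt, ENNReal.ofReal_toReal (ENNReal.add_ne_top.mpr ⟨hWt, hZt⟩)]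
    rw [hAe', hWZ', ENNReal.ofReal_rpow_of_nonneg hapos.le (by norm_num),
      ENNReal.ofReal_rpow_of_nonneg (by positivity) (by norm_num),
      ← ENNReal.ofReal_mul (by norm_num), ← ENNReal.ofReal_mul (by positivity)]
  rw [← hRHS]
  apply iSup_le
  intro ζ
  rw [← ofReal_norm_eq_coe_nnnorm, ← ENNReal.ofReal_mul (by positivity)]
  exact ENNReal.ofReal_le_ofReal (hpt ζ)
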